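/- arXiv:2111.06435 — 2 statements merged into one kernel-verified Lean document; each statement's English description precedes it below -/
import Mathlib

section
/- Let S be a real symmetric N × N matrix (Sᵀ = S) with eigenvalues λ₁ ≥ λ₂ ≥ ⋯ ≥ λ_N listed in decreasing order (with multiplicity), and let K ≤ N. For every real N × K matrix Φ with orthonormal columns, i.e. Φᵀ * Φ = 1 (the K × K identity), the trace satisfies trace(Φᵀ * S * Φ) ≤ ∑_{i=1}^{K} λ_i. Moreover, equality is attained when the columns of Φ are chosen to be K orthonormal eigenvectors of S associated with the eigenvalues λ₁, …, λ_K. -/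
/-!
Diagonalize `S = V diag(λ) Vᵀ` and put `W = Vᵀ Φ`, which again has orthonormal columns. Then
`trace (Φᵀ S Φ) = ∑ λᵢ pᵢ`, where `pᵢ` are the diagonal entries of the orthogonal projection
`W Wᵀ`; so `0 ≤ pᵢ ≤ 1` and `∑ pᵢ = K`. Over such weights a linear form with decreasing
coefficients is largest when the weight sits on the first `K` indices. For the equality case,
eigenvector columns give `S Φ = Φ diag(λ₁, …, λ_K)`.
-/

open Matrix Finset

theorem sum_mul_le_sum_of_threshold {ι : Type*} [Fintype ι] [DecidableEq ι]
    (lam p : ι → ℝ) (s : Finset ι) (t : ℝ)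
    (hs : ∀ i ∈ s, t ≤ lam i) (hsc : ∀ i ∉ s, lam i ≤ t)
    (hp0 : ∀ i, 0 ≤ p i) (hp1 : ∀ i, p i ≤ 1) (hsum : ∑ i, p i = #s) :
    ∑ i, lam i * p i ≤ ∑ i ∈ s, lam i := by
  have hdecomp : ∑ i, lam i * p i - ∑ i ∈ s, lam i
      = ∑ i ∈ s, (lam i - t) * (p i - 1) + ∑ i ∈ univ \ s, (lam i - t) * p i := by
    have hsplit := sum_sdiff (f := fun i => (lam i - t) * p i) (subset_univ s)
    have hsum' : ∑ i, t * p i = ∑ i ∈ s, t := by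
      rw [← mul_sum, hsum, sum_const, nsmul_eq_mul, mul_comm]
    simp only [mul_sub, sub_mul, mul_one, sum_sub_distrib] at hsplit hsum' ⊢
    linarith
  have hin : ∑ i ∈ s, (lam i - t) * (p i - 1) ≤ 0 :=
    sum_nonpos fun i hi => mul_nonpos_of_nonneg_of_nonpos
      (sub_nonneg.2 (hs i hi)) (sub_nonpos.2 (hp1 i))
  have hout : ∑ i ∈ univ \ s, (lam i - t) * p i ≤ 0 :=
    sum_nonpos fun i hi => mul_nonpos_of_nonpos_of_nonneg
      (sub_nonpos.2 (hsc i (mem_sdiff.1 hi).2)) (hp0 i)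
  linarith

theorem sum_mul_le_sum_of_forall_le {ι : Type*} [Fintype ι] [DecidableEq ι]
    (lam p : ι → ℝ) (s : Finset ι) (htop : ∀ i ∈ s, ∀ j ∉ s, lam j ≤ lam i)
    (hp0 : ∀ i, 0 ≤ p i) (hp1 : ∀ i, p i ≤ 1) (hsum : ∑ i, p i = #s) :
    ∑ i, lam i * p i ≤ ∑ i ∈ s, lam i := by
  rcases s.eq_empty_or_nonempty with rfl | hne
  · have hp : ∀ i, p i = 0 := fun i =>
      (sum_eq_zero_iff_of_nonneg fun i _ => hp0 i).1 (by simpa using hsum) i (mem_univ i)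
    simp [hp]
  · exact sum_mul_le_sum_of_threshold lam p s (s.inf' hne lam)
      (fun i hi => inf'_le lam hi) (fun j hj => le_inf' hne lam fun i hi => htop i hi j hj)
      hp0 hp1 hsum

theorem sum_mul_le_sum_castLE_of_antitone {N K : ℕ} (hK : K ≤ N) {lam : Fin N → ℝ}
    (hmono : Antitone lam) (p : Fin N → ℝ)
    (hp0 : ∀ i, 0 ≤ p i) (hp1 : ∀ i, p i ≤ 1) (hsum : ∑ i, p i = K) :
    ∑ i, lam i * p i ≤ ∑ k : Fin K, lam (Fin.castLE hK k) := by
  have hmem : ∀ i, i ∈ univ.map (Fin.castLEEmb hK) ↔ (i : ℕ) < K := by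
    intro i
    simp only [mem_map, mem_univ, true_and, Fin.castLEEmb_apply]
    exact ⟨fun ⟨k, hk⟩ => hk ▸ k.isLt, fun hi => ⟨⟨i, hi⟩, rfl⟩⟩
  rw [show ∑ k : Fin K, lam (Fin.castLE hK k) = ∑ i ∈ univ.map (Fin.castLEEmb hK), lam i
    by rw [sum_map]; rfl]
  refine sum_mul_le_sum_of_forall_le lam p _ (fun i hi j hj => hmono ?_) hp0 hp1
    (by simpa using hsum)
  rw [hmem] at hi hj
  exact Fin.le_def.2 (by omega)

theorem Matrix.trace_transpose_mul_diagonal_mul {m n R : Type*} [Fintype m] [Fintype n]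
    [DecidableEq m] [CommRing R] (W : Matrix m n R) (d : m → R) :
    (Wᵀ * diagonal d * W).trace = ∑ i, d i * (W * Wᵀ) i i := by
  rw [trace_mul_comm, ← Matrix.mul_assoc, trace]
  simp [mul_comm]

theorem Matrix.diag_mem_Icc_of_isSymm_of_isIdempotentElem {n : Type*} [Fintype n]
    {P : Matrix n n ℝ} (hsymm : P.IsSymm) (hidem : IsIdempotentElem P) (i : n) :
    P i i ∈ Set.Icc 0 1 := by
  have hdiag : P i i = ∑ j, P i j ^ 2 := by
    conv_lhs => rw [← hidem.eq]
    simp only [mul_apply, sq]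
    exact sum_congr rfl fun j _ => by rw [hsymm.apply j i]
  have hsq : P i i ^ 2 ≤ P i i :=
    hdiag ▸ single_le_sum (fun j _ => sq_nonneg (P i j)) (mem_univ i)
  have hnonneg : 0 ≤ P i i := hdiag ▸ sum_nonneg fun j _ => sq_nonneg (P i j)
  constructor <;> nlinarith

theorem Matrix.mul_eq_mul_diagonal_of_mulVec_col {m n R : Type*} [Fintype m] [Fintype n]
    [DecidableEq n] [CommRing R]
    (S : Matrix m m R) (Φ : Matrix m n R) (μ : n → R)
    (h : ∀ k, S *ᵥ (fun i => Φ i k) = μ k • fun i => Φ i k) :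
    S * Φ = Φ * diagonal μ := by
  ext i k
  rw [mul_diagonal]
  simpa [mulVec, dotProduct, mul_apply, mul_comm] using congrFun (h k) i

theorem Matrix.diag_mul_transpose_mem_Icc_of_transpose_mul_self_eq_one {m n : Type*}
    [Fintype m] [Fintype n] [DecidableEq n] {W : Matrix m n ℝ} (hW : Wᵀ * W = 1) (i : m) :
    (W * Wᵀ) i i ∈ Set.Icc 0 1 := by
  refine diag_mem_Icc_of_isSymm_of_isIdempotentElem ?_ ?_ i
  · rw [IsSymm, transpose_mul, transpose_transpose]
  · rw [IsIdempotentElem, Matrix.mul_assoc, ← Matrix.mul_assoc Wᵀ, hW, Matrix.one_mul]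

theorem ky_fan_trace_maximization_general (N K : ℕ) (hK : K ≤ N)
    (S : Matrix (Fin N) (Fin N) ℝ)
    (lam : Fin N → ℝ) (hmono : Antitone lam)
    (hEig : ∃ V : Matrix (Fin N) (Fin N) ℝ,
      Vᵀ * V = 1 ∧ S = V * Matrix.diagonal lam * Vᵀ) :
    (∀ Φ : Matrix (Fin N) (Fin K) ℝ, Φᵀ * Φ = 1 →
        (Φᵀ * S * Φ).trace ≤ ∑ k : Fin K, lam (Fin.castLE hK k)) ∧
    (∀ Φ : Matrix (Fin N) (Fin K) ℝ, Φᵀ * Φ = 1 →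
        (∀ k : Fin K,
          S.mulVec (fun i => Φ i k) = lam (Fin.castLE hK k) • fun i => Φ i k) →
        (Φᵀ * S * Φ).trace = ∑ k : Fin K, lam (Fin.castLE hK k)) := by
  refine ⟨fun Φ hΦ => ?_, fun Φ hΦ hcols => ?_⟩
  · obtain ⟨V, hV, rfl⟩ := hEig
    set W := Vᵀ * Φ
    have hW : Wᵀ * W = 1 := by
      rw [transpose_mul, transpose_transpose, Matrix.mul_assoc, ← Matrix.mul_assoc V,
        mul_eq_one_comm.mp hV, Matrix.one_mul, hΦ]
    have hconj : Φᵀ * (V * diagonal lam * Vᵀ) * Φ = Wᵀ * diagonal lam * W := by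
      simp only [W, transpose_mul, transpose_transpose, Matrix.mul_assoc]
    have htrace : (W * Wᵀ).trace = K := by
      simpa [hW] using trace_mul_comm W Wᵀ
    have hdiag := diag_mul_transpose_mem_Icc_of_transpose_mul_self_eq_one hW
    rw [hconj, trace_transpose_mul_diagonal_mul]
    exact sum_mul_le_sum_castLE_of_antitone hK hmono _
      (fun i => (hdiag i).1) (fun i => (hdiag i).2) htrace
  · rw [Matrix.mul_assoc, mul_eq_mul_diagonal_of_mulVec_col S Φ _ hcols, ← Matrix.mul_assoc, hΦ,
      Matrix.one_mul, trace_diagonal]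

/-- Ky Fan trace-maximization principle: for a real symmetric matrix `S` with eigenvalues
`lam` listed in decreasing order (with multiplicity), and any `N × K` matrix `Φ` with
orthonormal columns, `trace (Φᵀ S Φ) ≤ λ₁ + ⋯ + λ_K`; equality holds when the columns of
`Φ` are orthonormal eigenvectors of `S` associated with `λ₁, …, λ_K`. -/
theorem ky_fan_trace_maximization (N K : ℕ) (hK : K ≤ N)
    (S : Matrix (Fin N) (Fin N) ℝ) (hS : Sᵀ = S)
    (lam : Fin N → ℝ) (hmono : Antitone lam)
    (hEig : ∃ V : Matrix (Fin N) (Fin N) ℝ,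
      Vᵀ * V = 1 ∧ S = V * Matrix.diagonal lam * Vᵀ) :
    (∀ Φ : Matrix (Fin N) (Fin K) ℝ, Φᵀ * Φ = 1 →
        (Φᵀ * S * Φ).trace ≤ ∑ k : Fin K, lam (Fin.castLE hK k)) ∧
    (∀ Φ : Matrix (Fin N) (Fin K) ℝ, Φᵀ * Φ = 1 →
        (∀ k : Fin K,
          S.mulVec (fun i => Φ i k) = lam (Fin.castLE hK k) • fun i => Φ i k) →
        (Φᵀ * S * Φ).trace = ∑ k : Fin K, lam (Fin.castLE hK k)) :=
  ky_fan_trace_maximization_general N K hK S lam hmono hEig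
end

section
/- Let U be a real N × M matrix and let λ₁ ≥ λ₂ ≥ ⋯ ≥ λ_N be the eigenvalues of the symmetric positive semidefinite matrix U * Uᵀ listed in decreasing order (with multiplicity), and let K ≤ N. Then for every real N × K matrix Φ with orthonormal columns (Φᵀ * Φ = 1, the K × K identity), the squared Frobenius reconstruction error satisfies ‖Φ * Φᵀ * U − U‖_F² ≥ ∑_{i=K+1}^{N} λ_i, and equality is attained when the columns of Φ are K orthonormal eigenvectors of U Uᵀ associated with the K largest eigenvalues λ₁, …, λ_K (equivalently, the first K left singular vectors of U). -/
/-!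
Since `P = ΦΦᵀ` is an orthogonal projection, `‖PU - U‖_F² = tr(UUᵀ) - tr(Φᵀ UUᵀ Φ)`.
Writing `UUᵀ = V diag(λ) Vᵀ` and `W = VᵀΦ`, which again has orthonormal columns,
`tr(Φᵀ UUᵀ Φ) = ∑ λᵢ tᵢ` where `tᵢ` is the squared norm of the `i`-th row of `W`.
These weights satisfy `0 ≤ tᵢ ≤ 1` and `∑ tᵢ = K`, and under such constraints `∑ λᵢ tᵢ`
is largest when the weight sits on the `K` largest eigenvalues. Eigenvector columns
realise exactly this choice, which gives the equality case.
-/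

open Matrix Finset

section

variable {ι R : Type*} [Fintype ι] [CommRing R] [LinearOrder R] [IsStrictOrderedRing R]

theorem Finset.sum_mul_le_sum_of_forall_notMem_le {s : Finset ι} {lam t : ι → R}
    (hsep : ∀ i ∈ s, ∀ j ∉ s, lam j ≤ lam i) (ht0 : ∀ i, 0 ≤ t i) (ht1 : ∀ i, t i ≤ 1)
    (hsum : ∑ i, t i = #s) : ∑ i, lam i * t i ≤ ∑ i ∈ s, lam i := by
  classical
  obtain ⟨c, hc_le, hle_c⟩ : ∃ c, (∀ i ∈ s, c ≤ lam i) ∧ ∀ j ∉ s, lam j ≤ c := by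
    rcases s.eq_empty_or_nonempty with rfl | hs
    · obtain ⟨c, hc⟩ := (Set.finite_range lam).bddAbove
      exact ⟨c, by simp, fun j _ => hc ⟨j, rfl⟩⟩
    · exact ⟨s.inf' hs lam, fun i hi => inf'_le _ hi,
        fun j hj => le_inf' _ _ fun i hi => hsep i hi j hj⟩
  calc ∑ i, lam i * t i = ∑ i, (lam i - c) * t i + c * #s := by
        rw [← hsum, mul_sum, ← sum_add_distrib]
        exact sum_congr rfl fun i _ => by ring
    _ ≤ ∑ i, (if i ∈ s then lam i - c else 0) + c * #s := by
        gcongr with i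
        split_ifs with hi
        · nlinarith [hc_le i hi, ht1 i]
        · nlinarith [hle_c i hi, ht0 i]
    _ = ∑ i ∈ s, lam i := by
        rw [sum_ite_mem, univ_inter, sum_sub_distrib, sum_const, nsmul_eq_mul]
        ring

end

theorem Fin.sum_castLE_eq_sum_filter_val_lt {M : Type*} [AddCommMonoid M] {K N : ℕ}
    (hK : K ≤ N) (f : Fin N → M) :
    ∑ k : Fin K, f (Fin.castLE hK k)
      = ∑ i ∈ univ.filter (fun i : Fin N => (i : ℕ) < K), f i := by
  refine (sum_map univ (Fin.castLEEmb hK) f).symm.trans (congrArg (Finset.sum · f) ?_)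
  ext i
  simp only [mem_map, mem_univ, true_and, mem_filter, Fin.coe_castLEEmb]
  exact ⟨fun ⟨k, hk⟩ => hk ▸ k.2, fun hi => ⟨⟨i, hi⟩, rfl⟩⟩

namespace Matrix

variable {m n k R : Type*}

section CommRing

variable [CommRing R]

theorem mul_transpose_apply_self [Fintype n] (W : Matrix m n R) (i : m) :
    (W * Wᵀ) i i = ∑ j, W i j ^ 2 := by
  simp only [mul_apply, transpose_apply, sq]

theorem sum_sq_eq_trace_mul_transpose [Fintype m] [Fintype n] (E : Matrix m n R) :
    ∑ i, ∑ j, E i j ^ 2 = trace (E * Eᵀ) := by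
  simp only [trace, diag, mul_transpose_apply_self]

theorem isIdempotentElem_mul_transpose [Fintype m] [Fintype k] [DecidableEq k]
    {Φ : Matrix m k R} (hΦ : Φᵀ * Φ = 1) : IsIdempotentElem (Φ * Φᵀ) := by
  rw [IsIdempotentElem, Matrix.mul_assoc, ← Matrix.mul_assoc Φᵀ, hΦ, Matrix.one_mul]

theorem sum_sq_mul_transpose_mul_sub [Fintype m] [Fintype n] [Fintype k] [DecidableEq m]
    [DecidableEq k] (U : Matrix m n R) {Φ : Matrix m k R} (hΦ : Φᵀ * Φ = 1) :
    ∑ i, ∑ j, ((Φ * Φᵀ * U - U) i j) ^ 2 = trace (U * Uᵀ) - trace (Φᵀ * (U * Uᵀ) * Φ) := by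
  set Q := 1 - Φ * Φᵀ
  have hQ : Q * Q = Q := (isIdempotentElem_mul_transpose hΦ).one_sub
  have hQt : Qᵀ = Q := by simp [Q, transpose_mul]
  have hE : Φ * Φᵀ * U - U = -(Q * U) := by rw [Matrix.sub_mul, Matrix.one_mul, neg_sub]
  calc ∑ i, ∑ j, ((Φ * Φᵀ * U - U) i j) ^ 2
      = trace (Q * Q * (U * Uᵀ)) := by
        rw [sum_sq_eq_trace_mul_transpose, hE, transpose_neg, Matrix.neg_mul, Matrix.mul_neg,
          neg_neg, transpose_mul, hQt, ← Matrix.mul_assoc, trace_mul_cycle]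
        simp only [Matrix.mul_assoc]
    _ = trace (U * Uᵀ) - trace (Φᵀ * (U * Uᵀ) * Φ) := by
        rw [hQ, Matrix.sub_mul, Matrix.one_mul, trace_sub, Matrix.mul_assoc, trace_mul_comm Φ]

theorem trace_transpose_mul_diagonal_mul_s4 [Fintype m] [Fintype n] [DecidableEq m]
    (W : Matrix m n R) (d : m → R) :
    trace (Wᵀ * diagonal d * W) = ∑ i, d i * ∑ j, W i j ^ 2 := by
  rw [Matrix.mul_assoc, trace_mul_comm, Matrix.mul_assoc]
  simp only [trace, diag, diagonal_mul, mul_transpose_apply_self]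

theorem sum_sq_eq_card_of_transpose_mul_self [Fintype m] [Fintype n] [DecidableEq n]
    {W : Matrix m n R} (hW : Wᵀ * W = 1) : ∑ i, ∑ j, W i j ^ 2 = Fintype.card n := by
  rw [sum_sq_eq_trace_mul_transpose, trace_mul_comm, hW, trace_one]

theorem mul_eq_mul_diagonal_of_mulVec_eq [Fintype m] [Fintype k] [DecidableEq k]
    {A : Matrix m m R} {Φ : Matrix m k R} {μ : k → R}
    (h : ∀ j, A *ᵥ (fun i => Φ i j) = μ j • fun i => Φ i j) :
    A * Φ = Φ * diagonal μ := by
  ext i j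
  have := congrFun (h j) i
  simp only [mulVec, dotProduct, Pi.smul_apply, smul_eq_mul] at this
  rw [mul_apply, this, mul_diagonal, mul_comm]

theorem trace_transpose_mul_mul_of_mulVec_eq [Fintype m] [Fintype k] [DecidableEq k]
    {A : Matrix m m R} {Φ : Matrix m k R} {μ : k → R} (hΦ : Φᵀ * Φ = 1)
    (h : ∀ j, A *ᵥ (fun i => Φ i j) = μ j • fun i => Φ i j) :
    trace (Φᵀ * A * Φ) = ∑ j, μ j := by
  rw [Matrix.mul_assoc, mul_eq_mul_diagonal_of_mulVec_eq h, ← Matrix.mul_assoc, hΦ,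
    Matrix.one_mul, trace_diagonal]

end CommRing

section Ordered

variable [CommRing R] [LinearOrder R] [IsStrictOrderedRing R]

theorem sum_sq_row_le_one_of_transpose_mul_self [Fintype m] [Fintype n] [DecidableEq n]
    {W : Matrix m n R} (hW : Wᵀ * W = 1) (i : m) : ∑ j, W i j ^ 2 ≤ 1 := by
  set Q := W * Wᵀ
  have hQ : Q * Q = Q := isIdempotentElem_mul_transpose hW
  have hQt : Qᵀ = Q := by simp [Q, transpose_mul]
  have hsq : Q i i ^ 2 ≤ Q i i := by
    calc Q i i ^ 2 ≤ ∑ j, Q i j ^ 2 :=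
          single_le_sum (f := fun j => Q i j ^ 2) (fun j _ => sq_nonneg _) (mem_univ i)
      _ = Q i i := by rw [← mul_transpose_apply_self, hQt, hQ]
  rw [← mul_transpose_apply_self]
  nlinarith

theorem trace_transpose_mul_mul_le_sum_filter_lt {N K : ℕ} (hK : K ≤ N)
    {A V : Matrix (Fin N) (Fin N) R} {lam : Fin N → R} (hmono : Antitone lam)
    (hV : V * Vᵀ = 1) (hA : A = V * diagonal lam * Vᵀ)
    {Φ : Matrix (Fin N) (Fin K) R} (hΦ : Φᵀ * Φ = 1) :
    trace (Φᵀ * A * Φ) ≤ ∑ i ∈ univ.filter (fun i : Fin N => (i : ℕ) < K), lam i := by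
  set W := Vᵀ * Φ
  have hW : Wᵀ * W = 1 := by
    rw [transpose_mul, transpose_transpose, Matrix.mul_assoc, ← Matrix.mul_assoc V, hV,
      Matrix.one_mul, hΦ]
  have hAW : Φᵀ * A * Φ = Wᵀ * diagonal lam * W := by
    simp only [W, hA, transpose_mul, transpose_transpose, Matrix.mul_assoc]
  rw [hAW, trace_transpose_mul_diagonal_mul_s4]
  refine sum_mul_le_sum_of_forall_notMem_le (fun i hi j hj => hmono ?_)
    (fun i => sum_nonneg fun j _ => sq_nonneg _) (sum_sq_row_le_one_of_transpose_mul_self hW) ?_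
  · simp only [mem_filter, mem_univ, true_and, not_lt] at hi hj
    exact Fin.le_def.mpr (by omega)
  · rw [sum_sq_eq_card_of_transpose_mul_self hW, Fintype.card_fin, Fin.card_filter_val_lt,
      min_eq_right hK]

end Ordered

end Matrix

/-- POD optimality: for a snapshot matrix `U` with `U Uᵀ` having eigenvalues `lam` in
decreasing order (with multiplicity), every orthonormal `Φ` satisfies
`‖ΦΦᵀU − U‖_F² ≥ λ_{K+1} + ⋯ + λ_N`, with equality when the columns of `Φ` are
orthonormal eigenvectors of `U Uᵀ` associated with the `K` largest eigenvalues. -/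
theorem pod_error_lower_bound (N M K : ℕ) (hK : K ≤ N)
    (U : Matrix (Fin N) (Fin M) ℝ)
    (lam : Fin N → ℝ) (hmono : Antitone lam)
    (hEig : ∃ V : Matrix (Fin N) (Fin N) ℝ,
      Vᵀ * V = 1 ∧ U * Uᵀ = V * Matrix.diagonal lam * Vᵀ) :
    (∀ Φ : Matrix (Fin N) (Fin K) ℝ, Φᵀ * Φ = 1 →
        (∑ i ∈ Finset.univ.filter (fun i : Fin N => K ≤ (i : ℕ)), lam i)
          ≤ ∑ i : Fin N, ∑ j : Fin M, ((Φ * Φᵀ * U - U) i j) ^ 2) ∧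
    (∀ Φ : Matrix (Fin N) (Fin K) ℝ, Φᵀ * Φ = 1 →
        (∀ k : Fin K,
          (U * Uᵀ).mulVec (fun i => Φ i k) = lam (Fin.castLE hK k) • fun i => Φ i k) →
        (∑ i : Fin N, ∑ j : Fin M, ((Φ * Φᵀ * U - U) i j) ^ 2)
          = ∑ i ∈ Finset.univ.filter (fun i : Fin N => K ≤ (i : ℕ)), lam i) := by
  obtain ⟨V, hV, hA⟩ := hEig
  have htrace : trace (U * Uᵀ) = ∑ i, lam i := by
    rw [hA, trace_mul_cycle, hV, Matrix.one_mul, trace_diagonal]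
  have hsplit : ∑ i ∈ univ.filter (fun i : Fin N => K ≤ (i : ℕ)), lam i
      = ∑ i, lam i - ∑ i ∈ univ.filter (fun i : Fin N => (i : ℕ) < K), lam i := by
    simp only [← sum_filter_not_add_sum_filter univ (fun i : Fin N => (i : ℕ) < K), not_lt,
      add_sub_cancel_right]
  refine ⟨fun Φ hΦ => ?_, fun Φ hΦ hcols => ?_⟩
  · rw [sum_sq_mul_transpose_mul_sub U hΦ, htrace, hsplit]
    linarith [trace_transpose_mul_mul_le_sum_filter_lt hK hmono (mul_eq_one_comm.mp hV) hA hΦ]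
  · rw [sum_sq_mul_transpose_mul_sub U hΦ, htrace, hsplit,
      trace_transpose_mul_mul_of_mulVec_eq hΦ hcols, Fin.sum_castLE_eq_sum_filter_val_lt]
end
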